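/- arXiv:2101.09258 — 3 statements merged into one kernel-verified Lean document; each statement's English description precedes it below -/
import Mathlib

section
/- Denoising score matching equivalence: let p be a probability density on ℝ^D and k(x'|x) a transition density with marginal q(x') = ∫ p(x) k(x'|x) dx. For any measurable vector field s : ℝ^D → ℝ^D, one has E_{q(x')}[s(x')ᵀ ∇_{x'} log q(x')] = E_{p(x)} E_{k(x'|x)}[s(x')ᵀ ∇_{x'} log k(x'|x)], assuming all integrands are integrable, k(·|x) is differentiable in x', q is differentiable, and differentiation under the integral sign is valid. Consequently, E_q[‖s(x') - ∇ log q(x')‖²] and E_{p,k}[‖s(x') - ∇_{x'} log k(x'|x)‖²] differ by a constant independent of s. -/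
open MeasureTheory Filter
open scoped RealInnerProductSpace Topology

section Aux

variable {F : Type*} [NormedAddCommGroup F] [NormedSpace ℝ F]

private lemma dsm_fderiv_seq_limit {f : F → ℝ} {L : F →L[ℝ] ℝ} {x w : F} (hf : HasFDerivAt f L x) :
    Tendsto (fun n : ℕ => ((n : ℝ) + 1) * (f (x + ((n : ℝ) + 1)⁻¹ • w) - f x)) atTop
      (𝓝 (L w)) := by
  have hc : HasDerivAt (fun t : ℝ => x + t • w) w 0 := by
    simpa using ((hasDerivAt_id (0:ℝ)).smul_const w).const_add x
  have hf' : HasFDerivAt f L (x + (0:ℝ) • w) := by simpa using hf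
  have hg : HasDerivAt (fun t : ℝ => f (x + t • w)) (L w) 0 := by
    exact hf'.comp_hasDerivAt (x := (0:ℝ)) hc
  have hslope := hasDerivAt_iff_tendsto_slope.mp hg
  have htend : Tendsto (fun n : ℕ => ((n : ℝ) + 1)⁻¹) atTop (𝓝[≠] (0:ℝ)) := by
    apply tendsto_nhdsWithin_of_tendsto_nhds_of_eventually_within
    · exact tendsto_one_div_add_atTop_nhds_zero_nat.congr (by intro n; simp [one_div])
    · refine Eventually.of_forall fun n => ?_
      have : (0:ℝ) < ((n:ℝ)+1)⁻¹ := by positivity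
      exact ne_of_gt this
  have h2 := hslope.comp htend
  refine h2.congr fun n => ?_
  have hne : ((n:ℝ)+1)⁻¹ ≠ 0 := by positivity
  simp only [Function.comp_apply, slope_def_field, zero_smul, add_zero]
  field_simp
  ring

end Aux

private lemma dsm_gradient_log_comp {F : Type*} [NormedAddCommGroup F] [InnerProductSpace ℝ F]
    [CompleteSpace F] {f : F → ℝ} {x : F} (hf : DifferentiableAt ℝ f x) (hx : 0 < f x) :
    gradient (fun y => Real.log (f y)) x = (f x)⁻¹ • gradient f x := by
  have h1 : HasFDerivAt (fun y => Real.log (f y)) ((f x)⁻¹ • fderiv ℝ f x) x := by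
    exact (Real.hasDerivAt_log hx.ne').comp_hasFDerivAt x hf.hasFDerivAt
  have h2 : fderiv ℝ (fun y => Real.log (f y)) x = (f x)⁻¹ • fderiv ℝ f x := h1.fderiv
  rw [gradient, h2]
  exact (InnerProductSpace.toDual ℝ F).symm.map_smulₛₗ _ _

private lemma dsm_slice_aesm {D : ℕ} (p : EuclideanSpace ℝ (Fin D) → ℝ)
    (k : EuclideanSpace ℝ (Fin D) → EuclideanSpace ℝ (Fin D) → ℝ)
    (hpk : ∀ y, AEMeasurable (fun x => p x * k y x) volume)
    (hkd : ∀ x, Differentiable ℝ (fun x' => k x' x)) (x' : EuclideanSpace ℝ (Fin D)) :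
    AEStronglyMeasurable (fun x => p x • gradient (fun y => k y x) x') volume := by
  have hcoord : ∀ i : Fin D,
      AEMeasurable (fun x => p x * gradient (fun y => k y x) x' i) volume := by
    intro i
    set w : EuclideanSpace ℝ (Fin D) := EuclideanSpace.single i 1 with hw
    have hlim : ∀ x, Tendsto
        (fun n : ℕ => ((n : ℝ) + 1) * (p x * k (x' + ((n : ℝ) + 1)⁻¹ • w) x - p x * k x' x))
        atTop (𝓝 (p x * gradient (fun y => k y x) x' i)) := by
      intro x
      have hfd : HasFDerivAt (fun y => k y x) (fderiv ℝ (fun y => k y x) x') x' :=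
        ((hkd x) x').hasFDerivAt
      have h1 := (dsm_fderiv_seq_limit (w := w) hfd).const_mul (p x)
      have h2 : fderiv ℝ (fun y => k y x) x' w = gradient (fun y => k y x) x' i := by
        have h3 : fderiv ℝ (fun y => k y x) x'
            = InnerProductSpace.toDual ℝ _ (gradient (fun y => k y x) x') := by
          rw [gradient, LinearIsometryEquiv.apply_symm_apply]
        rw [h3, InnerProductSpace.toDual_apply_apply, hw, EuclideanSpace.inner_single_right]
        simp
      rw [h2] at h1
      refine h1.congr fun n => ?_
      ring
    refine aemeasurable_of_tendsto_metrizable_ae' (fun n => ?_) (Eventually.of_forall hlim)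
    exact ((hpk (x' + ((n : ℝ) + 1)⁻¹ • w)).sub (hpk x')).const_mul ((n : ℝ) + 1)
  have hrep : (fun x => p x • gradient (fun y => k y x) x')
      = fun x => ∑ i, (p x * gradient (fun y => k y x) x' i) • EuclideanSpace.single i 1 := by
    funext x
    have h : p x • gradient (fun y => k y x) x'
        = ∑ i, (p x • gradient (fun y => k y x) x') i • EuclideanSpace.single i 1 := by
      ext j
      rw [WithLp.ofLp_sum, Finset.sum_apply]
      simp [EuclideanSpace.single_apply]
    rw [h]
    congr 1
  rw [hrep]
  exact Finset.aestronglyMeasurable_fun_sum _ fun i _ =>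
    ((hcoord i).aestronglyMeasurable).smul_const _

/-- Denoising score matching equivalence: the expected inner product of a vector field `s`
with the score of the marginal `q` equals the expectation (over `p` and the transition
density `k`) of the inner product of `s` with the conditional score; consequently the
score matching and denoising score matching objectives differ by a constant independent
of `s`. -/
theorem denoising_score_matching_equivalence {D : ℕ}
    (p q : EuclideanSpace ℝ (Fin D) → ℝ)
    (k : EuclideanSpace ℝ (Fin D) → EuclideanSpace ℝ (Fin D) → ℝ)
    (s : EuclideanSpace ℝ (Fin D) → EuclideanSpace ℝ (Fin D))
    (hp0 : ∀ x, 0 ≤ p x) (hp1 : ∫ x, p x = 1)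
    (hk0 : ∀ x' x, 0 ≤ k x' x) (hk1 : ∀ x, ∫ x', k x' x = 1)
    (hq : ∀ x', q x' = ∫ x, p x * k x' x)
    (hqpos : ∀ x', 0 < q x') (hkpos : ∀ x' x, 0 < k x' x)
    (hqd : Differentiable ℝ q) (hkd : ∀ x, Differentiable ℝ (fun x' => k x' x))
    (hs : Measurable s)
    -- validity of differentiation under the integral sign:
    (hdui : ∀ x', gradient q x' = ∫ x, p x • gradient (fun y => k y x) x')
    -- integrability of all integrands appearing below:
    (hint1 : Integrable (fun x' => q x' * ⟪s x', gradient (fun y => Real.log (q y)) x'⟫))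
    (hint2 : Integrable (fun z : EuclideanSpace ℝ (Fin D) × EuclideanSpace ℝ (Fin D) =>
        p z.1 * k z.2 z.1 * ⟪s z.2, gradient (fun y => Real.log (k y z.1)) z.2⟫))
    (hint3 : Integrable (fun x' => q x' * ‖s x' - gradient (fun y => Real.log (q y)) x'‖ ^ 2))
    (hint4 : Integrable (fun z : EuclideanSpace ℝ (Fin D) × EuclideanSpace ℝ (Fin D) =>
        p z.1 * k z.2 z.1 * ‖s z.2 - gradient (fun y => Real.log (k y z.1)) z.2‖ ^ 2))
    (hint5 : Integrable (fun x' => q x' * ‖gradient (fun y => Real.log (q y)) x'‖ ^ 2))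
    (hint6 : Integrable (fun z : EuclideanSpace ℝ (Fin D) × EuclideanSpace ℝ (Fin D) =>
        p z.1 * k z.2 z.1 * ‖gradient (fun y => Real.log (k y z.1)) z.2‖ ^ 2)) :
    (∫ x', q x' * ⟪s x', gradient (fun y => Real.log (q y)) x'⟫
        = ∫ x, p x * ∫ x', k x' x * ⟪s x', gradient (fun y => Real.log (k y x)) x'⟫) ∧
    (∫ x', q x' * ‖s x' - gradient (fun y => Real.log (q y)) x'‖ ^ 2
        = (∫ x, p x * ∫ x', k x' x * ‖s x' - gradient (fun y => Real.log (k y x)) x'‖ ^ 2)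
          + ((∫ x', q x' * ‖gradient (fun y => Real.log (q y)) x'‖ ^ 2)
             - ∫ x, p x * ∫ x', k x' x * ‖gradient (fun y => Real.log (k y x)) x'‖ ^ 2)) := by
  classical
  -- gradient identities
  have hglq : ∀ x', gradient (fun y => Real.log (q y)) x' = (q x')⁻¹ • gradient q x' :=
    fun x' => dsm_gradient_log_comp (hqd x') (hqpos x')
  have hglk : ∀ x x', gradient (fun y => Real.log (k y x)) x'
      = (k x' x)⁻¹ • gradient (fun y => k y x) x' :=
    fun x x' => dsm_gradient_log_comp ((hkd x) x') (hkpos x' x)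
  have hgk : ∀ x x', gradient (fun y => k y x) x'
      = k x' x • gradient (fun y => Real.log (k y x)) x' := by
    intro x x'
    rw [hglk x x', smul_smul, mul_inv_cancel₀ (hkpos x' x).ne', one_smul]
  have pw1 : ∀ x', q x' * ⟪s x', gradient (fun y => Real.log (q y)) x'⟫
      = ⟪s x', gradient q x'⟫ := by
    intro x'
    rw [hglq x', real_inner_smul_right, ← mul_assoc, mul_inv_cancel₀ (hqpos x').ne', one_mul]
  have pw2 : ∀ x' x, p x * k x' x * ⟪s x', gradient (fun y => Real.log (k y x)) x'⟫
      = ⟪s x', p x • gradient (fun y => k y x) x'⟫ := by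
    intro x' x
    rw [real_inner_smul_right, hgk x x', real_inner_smul_right]
    ring
  -- basic integrability
  have hPk : ∀ x', Integrable (fun x => p x * k x' x) := by
    intro x'
    by_contra hcon
    have h0 : q x' = 0 := by rw [hq x', integral_undef hcon]
    exact (hqpos x').ne' h0
  -- product measure versions
  have hint2' : Integrable (fun z : EuclideanSpace ℝ (Fin D) × EuclideanSpace ℝ (Fin D) =>
      p z.1 * k z.2 z.1 * ⟪s z.2, gradient (fun y => Real.log (k y z.1)) z.2⟫)
      ((volume : Measure (EuclideanSpace ℝ (Fin D))).prod volume) := by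
    rwa [← Measure.volume_eq_prod]
  have hint4' : Integrable (fun z : EuclideanSpace ℝ (Fin D) × EuclideanSpace ℝ (Fin D) =>
      p z.1 * k z.2 z.1 * ‖s z.2 - gradient (fun y => Real.log (k y z.1)) z.2‖ ^ 2)
      ((volume : Measure (EuclideanSpace ℝ (Fin D))).prod volume) := by
    rwa [← Measure.volume_eq_prod]
  have hint6' : Integrable (fun z : EuclideanSpace ℝ (Fin D) × EuclideanSpace ℝ (Fin D) =>
      p z.1 * k z.2 z.1 * ‖gradient (fun y => Real.log (k y z.1)) z.2‖ ^ 2)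
      ((volume : Measure (EuclideanSpace ℝ (Fin D))).prod volume) := by
    rwa [← Measure.volume_eq_prod]
  have IPb : Integrable (fun z : EuclideanSpace ℝ (Fin D) × EuclideanSpace ℝ (Fin D) =>
      p z.1 * k z.2 z.1 * ‖s z.2‖ ^ 2)
      ((volume : Measure (EuclideanSpace ℝ (Fin D))).prod volume) := by
    refine ((hint4'.add (hint2'.const_mul 2)).sub hint6').congr (ae_of_all _ fun z => ?_)
    simp only [Pi.add_apply, Pi.sub_apply]
    rw [norm_sub_sq_real]
    ring
  have Iqb : Integrable (fun x' => q x' * ‖s x'‖ ^ 2) := by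
    refine ((hint3.add (hint1.const_mul 2)).sub hint5).congr (ae_of_all _ fun x' => ?_)
    simp only [Pi.add_apply, Pi.sub_apply]
    rw [norm_sub_sq_real]
    ring
  -- measurability & a.e. integrability of the vector slices
  have hGaesm : ∀ x', AEStronglyMeasurable
      (fun x => p x • gradient (fun y => k y x) x') volume :=
    dsm_slice_aesm p k (fun y => (hPk y).aemeasurable) hkd
  have hGint : ∀ᵐ x' : EuclideanSpace ℝ (Fin D),
      Integrable (fun x => p x • gradient (fun y => k y x) x') := by
    filter_upwards [hint6'.prod_left_ae] with x' h6
    refine Integrable.mono' ((hPk x').add h6) (hGaesm x') (ae_of_all _ fun x => ?_)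
    have hk' := hkpos x' x
    have hp' := hp0 x
    have hn := norm_nonneg (gradient (fun y => Real.log (k y x)) x')
    rw [norm_smul, hgk x x', norm_smul]
    simp only [Real.norm_eq_abs, abs_of_nonneg hp', abs_of_pos hk']
    have h1 : 0 ≤ p x * k x' x * (‖gradient (fun y => Real.log (k y x)) x'‖ - 1) ^ 2 :=
      mul_nonneg (mul_nonneg hp' hk'.le) (sq_nonneg _)
    have h2 : 0 ≤ p x * k x' x * ‖gradient (fun y => Real.log (k y x)) x'‖ :=
      mul_nonneg (mul_nonneg hp' hk'.le) hn
    simp only [Pi.add_apply]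
    nlinarith [h1, h2]
  -- the key a.e. identity
  have key : ∀ᵐ x' : EuclideanSpace ℝ (Fin D), ⟪s x', gradient q x'⟫
      = ∫ x, p x * k x' x * ⟪s x', gradient (fun y => Real.log (k y x)) x'⟫ := by
    filter_upwards [hGint] with x' hG
    calc ⟪s x', gradient q x'⟫
        = ⟪s x', ∫ x, p x • gradient (fun y => k y x) x'⟫ := by rw [hdui x']
      _ = ∫ x, ⟪s x', p x • gradient (fun y => k y x) x'⟫ := (integral_inner hG (s x')).symm
      _ = ∫ x, p x * k x' x * ⟪s x', gradient (fun y => Real.log (k y x)) x'⟫ :=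
          integral_congr_ae (ae_of_all _ fun x => (pw2 x' x).symm)
  -- Fubini swap for the inner-product integrand
  have hsw : Integrable (Function.uncurry fun x' x =>
      p x * k x' x * ⟪s x', gradient (fun y => Real.log (k y x)) x'⟫)
      ((volume : Measure (EuclideanSpace ℝ (Fin D))).prod volume) := hint2'.swap
  have conj1 : ∫ x', q x' * ⟪s x', gradient (fun y => Real.log (q y)) x'⟫
      = ∫ x, p x * ∫ x', k x' x * ⟪s x', gradient (fun y => Real.log (k y x)) x'⟫ := by
    calc ∫ x', q x' * ⟪s x', gradient (fun y => Real.log (q y)) x'⟫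
        = ∫ x', ⟪s x', gradient q x'⟫ := integral_congr_ae (ae_of_all _ pw1)
      _ = ∫ x', ∫ x, p x * k x' x * ⟪s x', gradient (fun y => Real.log (k y x)) x'⟫ :=
          integral_congr_ae key
      _ = ∫ x, ∫ x', p x * k x' x * ⟪s x', gradient (fun y => Real.log (k y x)) x'⟫ :=
          integral_integral_swap hsw
      _ = ∫ x, p x * ∫ x', k x' x * ⟪s x', gradient (fun y => Real.log (k y x)) x'⟫ := by
          refine integral_congr_ae (ae_of_all _ fun x => ?_)
          simp_rw [mul_assoc, integral_const_mul]
  refine ⟨conj1, ?_⟩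
  -- second conjunct
  have hiter : ∀ t : EuclideanSpace ℝ (Fin D) → EuclideanSpace ℝ (Fin D) → ℝ,
      Integrable (fun z : EuclideanSpace ℝ (Fin D) × EuclideanSpace ℝ (Fin D) =>
        p z.1 * k z.2 z.1 * t z.1 z.2)
        ((volume : Measure (EuclideanSpace ℝ (Fin D))).prod volume) →
      ∫ x, p x * ∫ x', k x' x * t x x'
        = ∫ z : EuclideanSpace ℝ (Fin D) × EuclideanSpace ℝ (Fin D),
            p z.1 * k z.2 z.1 * t z.1 z.2
            ∂((volume : Measure (EuclideanSpace ℝ (Fin D))).prod volume) := by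
    intro t ht
    have ht' : Integrable (Function.uncurry fun x x' => p x * (k x' x * t x x'))
        ((volume : Measure (EuclideanSpace ℝ (Fin D))).prod volume) :=
      ht.congr (ae_of_all _ fun z => by simp [Function.uncurry, mul_assoc])
    calc ∫ x, p x * ∫ x', k x' x * t x x'
        = ∫ x, ∫ x', p x * (k x' x * t x x') :=
          integral_congr_ae (ae_of_all _ fun x => (integral_const_mul _ _).symm)
      _ = ∫ z : EuclideanSpace ℝ (Fin D) × EuclideanSpace ℝ (Fin D),
            p z.1 * (k z.2 z.1 * t z.1 z.2)
            ∂((volume : Measure (EuclideanSpace ℝ (Fin D))).prod volume) :=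
          integral_integral ht'
      _ = ∫ z : EuclideanSpace ℝ (Fin D) × EuclideanSpace ℝ (Fin D),
            p z.1 * k z.2 z.1 * t z.1 z.2
            ∂((volume : Measure (EuclideanSpace ℝ (Fin D))).prod volume) :=
          integral_congr_ae (ae_of_all _ fun z => (mul_assoc _ _ _).symm)
  have hterm4 : ∫ x, p x * ∫ x', k x' x * ‖s x' - gradient (fun y => Real.log (k y x)) x'‖ ^ 2
      = ∫ z : EuclideanSpace ℝ (Fin D) × EuclideanSpace ℝ (Fin D),
          p z.1 * k z.2 z.1 * ‖s z.2 - gradient (fun y => Real.log (k y z.1)) z.2‖ ^ 2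
          ∂((volume : Measure (EuclideanSpace ℝ (Fin D))).prod volume) :=
    hiter (fun x x' => ‖s x' - gradient (fun y => Real.log (k y x)) x'‖ ^ 2) hint4'
  have htermc : ∫ x, p x * ∫ x', k x' x * ‖gradient (fun y => Real.log (k y x)) x'‖ ^ 2
      = ∫ z : EuclideanSpace ℝ (Fin D) × EuclideanSpace ℝ (Fin D),
          p z.1 * k z.2 z.1 * ‖gradient (fun y => Real.log (k y z.1)) z.2‖ ^ 2
          ∂((volume : Measure (EuclideanSpace ℝ (Fin D))).prod volume) :=
    hiter (fun x x' => ‖gradient (fun y => Real.log (k y x)) x'‖ ^ 2) hint6'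
  have hterma : ∫ x, p x * ∫ x', k x' x * ⟪s x', gradient (fun y => Real.log (k y x)) x'⟫
      = ∫ z : EuclideanSpace ℝ (Fin D) × EuclideanSpace ℝ (Fin D),
          p z.1 * k z.2 z.1 * ⟪s z.2, gradient (fun y => Real.log (k y z.1)) z.2⟫
          ∂((volume : Measure (EuclideanSpace ℝ (Fin D))).prod volume) :=
    hiter (fun x x' => ⟪s x', gradient (fun y => Real.log (k y x)) x'⟫) hint2'
  have hmargb : ∫ x', q x' * ‖s x'‖ ^ 2
      = ∫ z : EuclideanSpace ℝ (Fin D) × EuclideanSpace ℝ (Fin D),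
          p z.1 * k z.2 z.1 * ‖s z.2‖ ^ 2
          ∂((volume : Measure (EuclideanSpace ℝ (Fin D))).prod volume) := by
    have h1 : ∀ x', q x' * ‖s x'‖ ^ 2 = ∫ x, p x * k x' x * ‖s x'‖ ^ 2 := by
      intro x'
      rw [hq x']
      exact (integral_mul_const _ _).symm
    calc ∫ x', q x' * ‖s x'‖ ^ 2
        = ∫ x', ∫ x, p x * k x' x * ‖s x'‖ ^ 2 := integral_congr_ae (ae_of_all _ h1)
      _ = ∫ x, ∫ x', p x * k x' x * ‖s x'‖ ^ 2 := integral_integral_swap IPb.swap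
      _ = ∫ z : EuclideanSpace ℝ (Fin D) × EuclideanSpace ℝ (Fin D),
            p z.1 * k z.2 z.1 * ‖s z.2‖ ^ 2
            ∂((volume : Measure (EuclideanSpace ℝ (Fin D))).prod volume) :=
          integral_integral IPb
  have hexpand4 : ∫ z : EuclideanSpace ℝ (Fin D) × EuclideanSpace ℝ (Fin D),
        p z.1 * k z.2 z.1 * ‖s z.2 - gradient (fun y => Real.log (k y z.1)) z.2‖ ^ 2
        ∂((volume : Measure (EuclideanSpace ℝ (Fin D))).prod volume)
      = (∫ z : EuclideanSpace ℝ (Fin D) × EuclideanSpace ℝ (Fin D),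
          p z.1 * k z.2 z.1 * ‖s z.2‖ ^ 2
          ∂((volume : Measure (EuclideanSpace ℝ (Fin D))).prod volume))
        - 2 * (∫ z : EuclideanSpace ℝ (Fin D) × EuclideanSpace ℝ (Fin D),
            p z.1 * k z.2 z.1 * ⟪s z.2, gradient (fun y => Real.log (k y z.1)) z.2⟫
            ∂((volume : Measure (EuclideanSpace ℝ (Fin D))).prod volume))
        + ∫ z : EuclideanSpace ℝ (Fin D) × EuclideanSpace ℝ (Fin D),
            p z.1 * k z.2 z.1 * ‖gradient (fun y => Real.log (k y z.1)) z.2‖ ^ 2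
            ∂((volume : Measure (EuclideanSpace ℝ (Fin D))).prod volume) := by
    have hpt : ∀ z : EuclideanSpace ℝ (Fin D) × EuclideanSpace ℝ (Fin D),
        p z.1 * k z.2 z.1 * ‖s z.2 - gradient (fun y => Real.log (k y z.1)) z.2‖ ^ 2
        = p z.1 * k z.2 z.1 * ‖s z.2‖ ^ 2
          - 2 * (p z.1 * k z.2 z.1 * ⟪s z.2, gradient (fun y => Real.log (k y z.1)) z.2⟫)
          + p z.1 * k z.2 z.1 * ‖gradient (fun y => Real.log (k y z.1)) z.2‖ ^ 2 := by
      intro z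
      rw [norm_sub_sq_real]
      ring
    have I2 : Integrable (fun z : EuclideanSpace ℝ (Fin D) × EuclideanSpace ℝ (Fin D) =>
        2 * (p z.1 * k z.2 z.1 * ⟪s z.2, gradient (fun y => Real.log (k y z.1)) z.2⟫))
        ((volume : Measure (EuclideanSpace ℝ (Fin D))).prod volume) := hint2'.const_mul 2
    have I1 : Integrable (fun z : EuclideanSpace ℝ (Fin D) × EuclideanSpace ℝ (Fin D) =>
        p z.1 * k z.2 z.1 * ‖s z.2‖ ^ 2
          - 2 * (p z.1 * k z.2 z.1 * ⟪s z.2, gradient (fun y => Real.log (k y z.1)) z.2⟫))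
        ((volume : Measure (EuclideanSpace ℝ (Fin D))).prod volume) := IPb.sub I2
    rw [integral_congr_ae (ae_of_all _ hpt), integral_add I1 hint6',
      integral_sub IPb I2, integral_const_mul]
  have hexpandL : ∫ x', q x' * ‖s x' - gradient (fun y => Real.log (q y)) x'‖ ^ 2
      = (∫ x', q x' * ‖s x'‖ ^ 2)
        - 2 * (∫ x', q x' * ⟪s x', gradient (fun y => Real.log (q y)) x'⟫)
        + ∫ x', q x' * ‖gradient (fun y => Real.log (q y)) x'‖ ^ 2 := by
    have hpt : ∀ x', q x' * ‖s x' - gradient (fun y => Real.log (q y)) x'‖ ^ 2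
        = q x' * ‖s x'‖ ^ 2
          - 2 * (q x' * ⟪s x', gradient (fun y => Real.log (q y)) x'⟫)
          + q x' * ‖gradient (fun y => Real.log (q y)) x'‖ ^ 2 := by
      intro x'
      rw [norm_sub_sq_real]
      ring
    have I2 : Integrable (fun x' =>
        2 * (q x' * ⟪s x', gradient (fun y => Real.log (q y)) x'⟫)) := hint1.const_mul 2
    have I1 : Integrable (fun x' => q x' * ‖s x'‖ ^ 2
        - 2 * (q x' * ⟪s x', gradient (fun y => Real.log (q y)) x'⟫)) := Iqb.sub I2
    rw [integral_congr_ae (ae_of_all _ hpt), integral_add I1 hint5,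
      integral_sub Iqb I2, integral_const_mul]
  rw [hexpandL, hmargb, conj1, hterma, hterm4, htermc, hexpand4]
  ring
end

section
/- Score matching equivalence (Hyvärinen): under the regularity and decay conditions above, for any C¹ vector field s : ℝ^D → ℝ^D, (1/2)∫ p(x)‖∇log p(x) - s(x)‖² dx = (1/2)∫ p(x)‖s(x)‖² dx + ∫ p(x)(∇·s)(x) dx + (1/2)∫ p(x)‖∇log p(x)‖² dx. In particular the two objectives (1/2)E_p‖∇log p - s‖² and E_p[(1/2)‖s‖² + ∇·s] differ by a constant independent of s. -/
open MeasureTheory Filter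
open scoped RealInnerProductSpace
open Set
open scoped Topology

lemma tendsto_poly_exp (m k : ℕ) (hk : k ≠ 0) :
    Tendsto (fun t : ℝ => (1 + t) ^ m * Real.exp (-t ^ k)) atTop (𝓝 0) := by
  have h := (Real.tendsto_pow_mul_exp_neg_atTop_nhds_zero m).const_mul ((2:ℝ) ^ m)
  rw [mul_zero] at h
  refine squeeze_zero' ?_ ?_ h
  · filter_upwards [eventually_ge_atTop (0:ℝ)] with t ht; positivity
  · filter_upwards [eventually_ge_atTop (1:ℝ)] with t ht
    have h1 : (1 + t) ^ m ≤ (2 * t) ^ m :=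
      pow_le_pow_left₀ (by linarith) (by linarith) m
    have h2 : Real.exp (-t ^ k) ≤ Real.exp (-t) := by
      rw [Real.exp_le_exp, neg_le_neg_iff]
      exact le_self_pow₀ ht hk
    calc (1 + t) ^ m * Real.exp (-t ^ k) ≤ (2 * t) ^ m * Real.exp (-t) :=
          mul_le_mul h1 h2 (Real.exp_pos _).le (by positivity)
      _ = 2 ^ m * (t ^ m * Real.exp (-t)) := by rw [mul_pow]; ring

lemma integral_div_pi_eq_zero {n : ℕ} (F : (Fin (n + 1) → ℝ) → (Fin (n + 1) → ℝ))
    (hF : ContDiff ℝ 1 F)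
    (hdecay : ∀ ε > (0:ℝ), ∃ R₀ : ℝ, 1 ≤ R₀ ∧
      ∀ x, R₀ ≤ ‖x‖ → ‖x‖ ^ (n + 1) * ‖F x‖ ≤ ε)
    (hint : Integrable (fun x => ∑ i, fderiv ℝ F x (Pi.single i 1) i)) :
    ∫ x, ∑ i, fderiv ℝ F x (Pi.single i 1) i = 0 := by
  set φ : (Fin (n + 1) → ℝ) → ℝ := fun x => ∑ i, fderiv ℝ F x (Pi.single i 1) i with hφ
  set B : ℕ → Set (Fin (n + 1) → ℝ) :=
    fun m => Icc (fun _ => -(m + 1 : ℝ)) (fun _ => (m + 1 : ℝ)) with hB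
  have hBunion : (⋃ m, B m) = univ := by
    ext x
    simp only [mem_iUnion, mem_univ, iff_true, hB, mem_Icc]
    obtain ⟨m, hm⟩ := exists_nat_ge ‖x‖
    have hx : ∀ i, |x i| ≤ (m : ℝ) := fun i =>
      le_trans (by simpa [Real.norm_eq_abs] using norm_le_pi_norm x i) hm
    exact ⟨m, fun i => by have h := (abs_le.1 (hx i)).1; show -((m:ℝ)+1) ≤ x i; linarith,
      fun i => by have h := (abs_le.1 (hx i)).2; show x i ≤ (m:ℝ)+1; linarith⟩
  have hlim1 : Tendsto (fun m => ∫ x in B m, φ x) atTop (𝓝 (∫ x, φ x)) := by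
    have h := tendsto_setIntegral_of_monotone (s := B) (f := φ) (μ := volume)
      (fun m => measurableSet_Icc)
      (fun m m' hmm' => Icc_subset_Icc
        (fun i => by simp only []; push_cast; have : (m:ℝ) ≤ m' := Nat.cast_le.2 hmm'; linarith)
        (fun i => by simp only []; push_cast; have : (m:ℝ) ≤ m' := Nat.cast_le.2 hmm'; linarith))
      (by rw [hBunion]; exact hint.integrableOn)
    rwa [hBunion, Measure.restrict_univ] at h
  -- the divergence theorem on each box
  have hbox : ∀ m : ℕ, ∫ x in B m, φ x =
      ∑ i : Fin (n + 1),
        ((∫ x in Icc ((fun _ => -(m + 1 : ℝ)) ∘ i.succAbove) ((fun _ => (m + 1 : ℝ)) ∘ i.succAbove),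
            F (i.insertNth ((m + 1 : ℝ)) x) i) -
          ∫ x in Icc ((fun _ => -(m + 1 : ℝ)) ∘ i.succAbove) ((fun _ => (m + 1 : ℝ)) ∘ i.succAbove),
            F (i.insertNth (-(m + 1 : ℝ)) x) i) := by
    intro m
    have := MeasureTheory.integral_divergence_of_hasFDerivAt_off_countable
      (fun _ => -(m + 1 : ℝ)) (fun _ => (m + 1 : ℝ))
      (fun i => by dsimp; linarith [Nat.cast_nonneg (α := ℝ) m]) F (fderiv ℝ F) ∅
      Set.countable_empty hF.continuous.continuousOn
      (fun x _ => (hF.differentiable one_ne_zero x).hasFDerivAt)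
      hint.integrableOn
    exact this
  set Bd : ℕ → ℝ := fun m =>
      ∑ i : Fin (n + 1),
        ((∫ x in Icc ((fun _ => -(m + 1 : ℝ)) ∘ i.succAbove) ((fun _ => (m + 1 : ℝ)) ∘ i.succAbove),
            F (i.insertNth ((m + 1 : ℝ)) x) i) -
          ∫ x in Icc ((fun _ => -(m + 1 : ℝ)) ∘ i.succAbove) ((fun _ => (m + 1 : ℝ)) ∘ i.succAbove),
            F (i.insertNth (-(m + 1 : ℝ)) x) i) with hBd
  have hlim2 : Tendsto Bd atTop (𝓝 0) := by
    rw [NormedAddCommGroup.tendsto_nhds_zero]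
    intro ε hε
    set ε' : ℝ := ε / ((n + 1) * 2 ^ (n + 2)) with hε'
    have hε'pos : 0 < ε' := by positivity
    obtain ⟨R₀, hR₀1, hR₀⟩ := hdecay ε' hε'pos
    obtain ⟨M, hM⟩ := exists_nat_ge R₀
    filter_upwards [eventually_ge_atTop M] with m hm
    set R : ℝ := (m : ℝ) + 1 with hRdef
    have hmm : (M : ℝ) ≤ (m : ℝ) := Nat.cast_le.2 hm
    have hRR₀ : R₀ ≤ R := by simp only [hRdef]; linarith
    have hR1 : 1 ≤ R := le_trans hR₀1 hRR₀
    have hR0 : 0 < R := by linarith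
    have hface : ∀ (i : Fin (n + 1)) (c : ℝ), |c| = R →
        ‖∫ x in Icc ((fun _ => -R) ∘ i.succAbove) ((fun _ => R) ∘ i.succAbove),
          F (i.insertNth c x) i‖ ≤ ε' * 2 ^ n := by
      intro i c hc
      have hle : ((fun _ => -R) ∘ i.succAbove) ≤ ((fun _ => R) ∘ i.succAbove) :=
        fun j => by dsimp; linarith
      have hvol : volume (Icc ((fun _ => -R) ∘ i.succAbove) ((fun _ => R) ∘ i.succAbove)) < ⊤ := by
        rw [Real.volume_Icc_pi]
        exact ENNReal.prod_lt_top (fun j _ => ENNReal.ofReal_lt_top)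
      have hbound : ∀ x ∈ Icc ((fun _ => -R) ∘ i.succAbove) ((fun _ => R) ∘ i.succAbove),
          ‖F (i.insertNth c x) i‖ ≤ ε' / R ^ (n + 1) := by
        intro x _
        set y : Fin (n + 1) → ℝ := i.insertNth c x with hy
        have hyi : y i = c := by rw [hy]; exact Fin.insertNth_apply_same (α := fun _ => ℝ) i c x
        have hyn : R ≤ ‖y‖ := by
          calc R = |y i| := by rw [hyi, hc]
            _ ≤ ‖y‖ := by rw [← Real.norm_eq_abs]; exact norm_le_pi_norm y i
        have h1 := hR₀ y (hRR₀.trans hyn)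
        have h2 : R ^ (n + 1) ≤ ‖y‖ ^ (n + 1) := pow_le_pow_left₀ hR0.le hyn _
        have h3 : ‖F y‖ ≤ ε' / R ^ (n + 1) := by
          rw [le_div_iff₀ (by positivity)]
          calc ‖F y‖ * R ^ (n + 1) ≤ ‖F y‖ * ‖y‖ ^ (n + 1) := by
                exact mul_le_mul_of_nonneg_left h2 (norm_nonneg _)
            _ = ‖y‖ ^ (n + 1) * ‖F y‖ := mul_comm _ _
            _ ≤ ε' := h1
        exact le_trans (norm_le_pi_norm (F y) i) h3
      have hest := norm_setIntegral_le_of_norm_le_const_ae' hvol (Filter.Eventually.of_forall hbound)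
      have hvolval : (volume (Icc ((fun _ => -R) ∘ i.succAbove)
          ((fun _ => R) ∘ i.succAbove))).toReal = (2 * R) ^ n := by
        rw [Real.volume_Icc_pi_toReal hle]
        have : ∀ j : Fin n, ((fun _ => R) ∘ i.succAbove) j - ((fun _ => -R) ∘ i.succAbove) j
            = 2 * R := fun j => by dsimp; ring
        simp only [this, Finset.prod_const, Finset.card_univ, Fintype.card_fin]
      calc ‖∫ x in Icc ((fun _ => -R) ∘ i.succAbove) ((fun _ => R) ∘ i.succAbove),
            F (i.insertNth c x) i‖
          ≤ ε' / R ^ (n + 1) * (2 * R) ^ n := by rw [← hvolval]; exact hest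
        _ = ε' * 2 ^ n / R := by
            rw [mul_pow, pow_succ]
            field_simp
        _ ≤ ε' * 2 ^ n := div_le_self (by positivity) hR1
    have hBd' : ‖Bd m‖ ≤ (n + 1) * (2 * (ε' * 2 ^ n)) := by
      calc ‖Bd m‖ ≤ ∑ i : Fin (n + 1),
            ‖(∫ x in Icc ((fun _ => -R) ∘ i.succAbove) ((fun _ => R) ∘ i.succAbove),
              F (i.insertNth R x) i) -
            ∫ x in Icc ((fun _ => -R) ∘ i.succAbove) ((fun _ => R) ∘ i.succAbove),
              F (i.insertNth (-R) x) i‖ := norm_sum_le _ _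
        _ ≤ ∑ _i : Fin (n + 1), (ε' * 2 ^ n + ε' * 2 ^ n) := by
            refine Finset.sum_le_sum fun i _ => ?_
            refine (norm_sub_le _ _).trans (add_le_add ?_ ?_)
            · exact hface i R (abs_of_pos hR0)
            · exact hface i (-R) (by rw [abs_neg]; exact abs_of_pos hR0)
        _ = (n + 1) * (2 * (ε' * 2 ^ n)) := by
            rw [Finset.sum_const, Finset.card_univ, Fintype.card_fin]
            push_cast; ring
    have heq : ((n : ℝ) + 1) * (2 * (ε' * 2 ^ n)) = ε / 2 := by
      rw [hε']
      field_simp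
      ring
    calc ‖Bd m‖ ≤ ε / 2 := by rw [← heq]; exact hBd'
      _ < ε := by linarith
  have hlim1' : Tendsto Bd atTop (𝓝 (∫ x, φ x)) := Tendsto.congr hbox hlim1
  have := tendsto_nhds_unique hlim1' hlim2
  simpa [hφ] using this


/-- Divergence `∇·F` of a vector field on Euclidean space. -/
noncomputable def divg {D : ℕ}
    (F : EuclideanSpace ℝ (Fin D) → EuclideanSpace ℝ (Fin D))
    (x : EuclideanSpace ℝ (Fin D)) : ℝ :=
  ∑ i, fderiv ℝ F x (EuclideanSpace.single i 1) i

lemma euc_coord_le_norm {m : ℕ} (v : EuclideanSpace ℝ (Fin m)) (i : Fin m) :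
    |v i| ≤ ‖v‖ := by
  have h := abs_real_inner_le_norm v (EuclideanSpace.single i (1:ℝ))
  simpa [EuclideanSpace.inner_single_right, EuclideanSpace.norm_single] using h

lemma euc_equiv_norm_le {m : ℕ} (v : EuclideanSpace ℝ (Fin m)) :
    ‖(PiLp.continuousLinearEquiv 2 ℝ (fun _ : Fin m => ℝ)) v‖ ≤ ‖v‖ := by
  rw [pi_norm_le_iff_of_nonneg (norm_nonneg v)]
  intro i
  simpa [Real.norm_eq_abs] using euc_coord_le_norm v i

lemma integral_divg_eq_zero {n : ℕ}
    (f : EuclideanSpace ℝ (Fin (n + 1)) → EuclideanSpace ℝ (Fin (n + 1)))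
    (hf : ContDiff ℝ 1 f)
    (hdecay : ∀ ε > (0:ℝ), ∃ R₀ : ℝ, 1 ≤ R₀ ∧
      ∀ x, R₀ ≤ ‖x‖ → ‖x‖ ^ (n + 1) * ‖f x‖ ≤ ε)
    (hint : Integrable (fun x => divg f x)) :
    ∫ x, divg f x = 0 := by
  set e := PiLp.continuousLinearEquiv 2 ℝ (fun _ : Fin (n + 1) => ℝ) with he
  set F : (Fin (n + 1) → ℝ) → (Fin (n + 1) → ℝ) := fun y => e (f (e.symm y)) with hFdef
  have hFc : ContDiff ℝ 1 F :=
    (e.contDiff).comp (hf.comp e.symm.contDiff)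
  have hfd : ∀ y, fderiv ℝ F y =
      ((e : _ →L[ℝ] _).comp (fderiv ℝ f (e.symm y))).comp
        ((e.symm : _ →L[ℝ] _)) := by
    intro y
    have h1 : F = (⇑e ∘ f) ∘ ⇑e.symm := rfl
    rw [h1, ContinuousLinearEquiv.comp_right_fderiv, ContinuousLinearEquiv.comp_fderiv]
  have hdivF : ∀ y, (∑ i, fderiv ℝ F y (Pi.single i 1) i) = divg f (e.symm y) := by
    intro y
    rw [divg]
    refine Finset.sum_congr rfl fun i _ => ?_
    rw [hfd]
    rfl
  have hmp := (EuclideanSpace.volume_preserving_symm_measurableEquiv_toLp (Fin (n + 1))).symm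
  have hcoe : ⇑(MeasurableEquiv.toLp 2 (Fin (n + 1) → ℝ)).symm.symm = ⇑e.symm := rfl
  have hIntF : Integrable (fun y => ∑ i, fderiv ℝ F y (Pi.single i 1) i) := by
    have h2 : Integrable
        (fun y => divg f ((MeasurableEquiv.toLp 2 (Fin (n + 1) → ℝ)).symm.symm y)) :=
      (hmp.integrable_comp_emb (MeasurableEquiv.measurableEmbedding _)).2 hint
    refine h2.congr ?_
    refine Filter.Eventually.of_forall fun y => ?_
    rw [hcoe]
    exact (hdivF y).symm
  have h0 : ∫ y, ∑ i, fderiv ℝ F y (Pi.single i 1) i = ∫ x, divg f x := by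
    calc ∫ y, ∑ i, fderiv ℝ F y (Pi.single i 1) i
        = ∫ y, divg f ((MeasurableEquiv.toLp 2 (Fin (n + 1) → ℝ)).symm.symm y) := by
          refine integral_congr_ae (Filter.Eventually.of_forall fun y => ?_)
          rw [hcoe]; exact hdivF y
      _ = ∫ x, divg f x := hmp.integral_comp' _
  have hdecayF : ∀ ε > (0:ℝ), ∃ R₀ : ℝ, 1 ≤ R₀ ∧
      ∀ y, R₀ ≤ ‖y‖ → ‖y‖ ^ (n + 1) * ‖F y‖ ≤ ε := by
    intro ε hε
    obtain ⟨R₀, h1, h⟩ := hdecay ε hε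
    refine ⟨R₀, h1, fun y hy => ?_⟩
    have h2 : ‖y‖ ≤ ‖e.symm y‖ := by
      calc ‖y‖ = ‖e (e.symm y)‖ := by rw [e.apply_symm_apply]
        _ ≤ ‖e.symm y‖ := euc_equiv_norm_le _
    have h3 : ‖F y‖ ≤ ‖f (e.symm y)‖ := euc_equiv_norm_le _
    have h4 := h (e.symm y) (hy.trans h2)
    calc ‖y‖ ^ (n + 1) * ‖F y‖ ≤ ‖e.symm y‖ ^ (n + 1) * ‖f (e.symm y)‖ :=
          mul_le_mul (pow_le_pow_left₀ (norm_nonneg _) h2 _) h3 (norm_nonneg _) (by positivity)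
      _ ≤ ε := h4
  have hz := integral_div_pi_eq_zero F hFc hdecayF hIntF
  rw [h0] at hz
  exact hz


open InnerProductSpace

/-- Score matching equivalence (Hyvärinen): the explicit score matching objective expands
as `(1/2)∫ p ‖∇log p - s‖² = (1/2)∫ p ‖s‖² + ∫ p (∇·s) + (1/2)∫ p ‖∇log p‖²`, so the
implicit objective `E_p[(1/2)‖s‖² + ∇·s]` differs from it by a constant independent
of `s`. -/
theorem score_matching_equivalence {D : ℕ}
    (p : EuclideanSpace ℝ (Fin D) → ℝ)
    (s : EuclideanSpace ℝ (Fin D) → EuclideanSpace ℝ (Fin D))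
    (hp_pos : ∀ x, 0 < p x) (hp_smooth : ContDiff ℝ 1 p) (hp1 : ∫ x, p x = 1)
    (hp_decay : ∃ k > 0, (fun x => p x)
      =O[cocompact (EuclideanSpace ℝ (Fin D))] fun x => Real.exp (-‖x‖ ^ k))
    (hs_smooth : ContDiff ℝ 1 s)
    (hs_growth : ∃ C n, ∀ x, ‖s x‖ ≤ C * (1 + ‖x‖) ^ n)
    (hdiv_growth : ∃ C n, ∀ x, |divg s x| ≤ C * (1 + ‖x‖) ^ n)
    (hint1 : Integrable
      (fun x => p x * ‖gradient (fun y => Real.log (p y)) x - s x‖ ^ 2))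
    (hint2 : Integrable (fun x => p x * ‖s x‖ ^ 2))
    (hint3 : Integrable (fun x => p x * divg s x))
    (hint4 : Integrable (fun x => p x * ‖gradient (fun y => Real.log (p y)) x‖ ^ 2)) :
    (1 / 2) * ∫ x, p x * ‖gradient (fun y => Real.log (p y)) x - s x‖ ^ 2
      = (1 / 2) * (∫ x, p x * ‖s x‖ ^ 2) + (∫ x, p x * divg s x)
        + (1 / 2) * ∫ x, p x * ‖gradient (fun y => Real.log (p y)) x‖ ^ 2 := by
  cases D with
  | zero =>
    haveI : Subsingleton (EuclideanSpace ℝ (Fin 0)) :=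
      ⟨fun a b => by ext i; exact i.elim0⟩
    have hz : ∀ v : EuclideanSpace ℝ (Fin 0), ‖v‖ = 0 := fun v => by
      rw [Subsingleton.elim v 0, norm_zero]
    have hd : ∀ x, divg s x = 0 := fun x => by simp [divg]
    have e1 : ∫ x, p x * ‖gradient (fun y => Real.log (p y)) x - s x‖ ^ 2 = 0 := by
      simp [hz]
    have e2 : ∫ x, p x * ‖s x‖ ^ 2 = 0 := by simp [hz]
    have e3 : ∫ x, p x * divg s x = 0 := by simp [hd]
    have e4 : ∫ x, p x * ‖gradient (fun y => Real.log (p y)) x‖ ^ 2 = 0 := by simp [hz]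
    rw [e1, e2, e3, e4]; ring
  | succ n =>
    set g := gradient (fun y => Real.log (p y)) with hgdef
    have hpdiff : Differentiable ℝ p := hp_smooth.differentiable one_ne_zero
    have hsdiff : Differentiable ℝ s := hs_smooth.differentiable one_ne_zero
    have hgradlog : ∀ x, gradient p x = p x • g x := by
      intro x
      have hfd : HasFDerivAt (fun y => Real.log (p y)) ((p x)⁻¹ • fderiv ℝ p x) x :=
        (Real.hasDerivAt_log (hp_pos x).ne').comp_hasFDerivAt x (hpdiff x).hasFDerivAt
      have hgx : g x = (p x)⁻¹ • gradient p x := by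
        have h1 : g x = (toDual ℝ _).symm ((p x)⁻¹ • fderiv ℝ p x) :=
          hfd.hasGradientAt.gradient
        have h2 : gradient p x = (toDual ℝ _).symm (fderiv ℝ p x) :=
          ((hpdiff x).hasFDerivAt.hasGradientAt).gradient
        rw [h1, h2, _root_.map_smul]
      rw [hgx, smul_smul, mul_inv_cancel₀ (hp_pos x).ne', one_smul]
    have hinner : ∀ x, p x * ⟪g x, s x⟫ = ⟪gradient p x, s x⟫ := by
      intro x; rw [hgradlog x, real_inner_smul_left]
    have hfdp : ∀ (x : EuclideanSpace ℝ (Fin (n + 1)))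
        (v : EuclideanSpace ℝ (Fin (n + 1))),
        fderiv ℝ p x v = ⟪gradient p x, v⟫ := by
      intro x v
      have h2 : gradient p x = (toDual ℝ _).symm (fderiv ℝ p x) :=
        ((hpdiff x).hasFDerivAt.hasGradientAt).gradient
      rw [h2, toDual_symm_apply]
    have hdivprod : ∀ x, divg (fun y => p y • s y) x
        = ⟪gradient p x, s x⟫ + p x * divg s x := by
      intro x
      have hfd : fderiv ℝ (fun y => p y • s y) x
          = p x • fderiv ℝ s x + (fderiv ℝ p x).smulRight (s x) :=
        fderiv_smul (hpdiff x) (hsdiff x)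
      have hterm : ∀ i : Fin (n + 1),
          fderiv ℝ (fun y => p y • s y) x (EuclideanSpace.single i 1) i
          = p x * fderiv ℝ s x (EuclideanSpace.single i 1) i
            + fderiv ℝ p x (EuclideanSpace.single i 1) * s x i := by
        intro i
        rw [hfd]
        rfl
      rw [divg]
      simp only [hterm]
      rw [Finset.sum_add_distrib]
      have hsum1 : ∑ i, p x * fderiv ℝ s x (EuclideanSpace.single i 1) i
          = p x * divg s x := by rw [divg, Finset.mul_sum]
      have hsum2 : ∑ i, fderiv ℝ p x (EuclideanSpace.single i (1:ℝ)) * s x i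
          = ⟪gradient p x, s x⟫ := by
        rw [PiLp.inner_apply]
        refine Finset.sum_congr rfl fun i _ => ?_
        rw [hfdp x (EuclideanSpace.single i 1), EuclideanSpace.inner_single_right]
        simp [mul_comm]
      rw [hsum1, hsum2]
      ring
    set f := fun x => p x • s x with hfdef
    have hfC : ContDiff ℝ 1 f := hp_smooth.smul hs_smooth
    have hptwise : ∀ x, p x * ⟪g x, s x⟫
        = (1/2) * (p x * ‖g x‖ ^ 2 + p x * ‖s x‖ ^ 2 - p x * ‖g x - s x‖ ^ 2) := by
      intro x
      rw [norm_sub_sq_real]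
      ring
    have hI : Integrable (fun x => p x * ⟪g x, s x⟫) := by
      have h2 := ((hint4.add hint2).sub hint1).const_mul (1/2 : ℝ)
      refine h2.congr (Filter.Eventually.of_forall fun x => ?_)
      exact (hptwise x).symm
    have hI' : Integrable (fun x => ⟪gradient p x, s x⟫) :=
      hI.congr (Filter.Eventually.of_forall fun x => hinner x)
    have hIdiv : Integrable (fun x => divg f x) := by
      refine (hI'.add hint3).congr (Filter.Eventually.of_forall fun x => ?_)
      exact (hdivprod x).symm
    -- decay of f
    have hdecayf : ∀ ε > (0:ℝ), ∃ R₀ : ℝ, 1 ≤ R₀ ∧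
        ∀ x, R₀ ≤ ‖x‖ → ‖x‖ ^ (n + 1) * ‖f x‖ ≤ ε := by
      obtain ⟨k, hk, hO⟩ := hp_decay
      obtain ⟨Cs, ns, hsg⟩ := hs_growth
      obtain ⟨c, hc⟩ := hO.bound
      rw [Filter.hasBasis_cocompact.eventually_iff] at hc
      obtain ⟨K, hK, hKb⟩ := hc
      obtain ⟨r, hr⟩ := hK.isBounded.subset_closedBall 0
      have hpb : ∀ x : EuclideanSpace ℝ (Fin (n + 1)), r + 1 ≤ ‖x‖ →
          |p x| ≤ max c 0 * Real.exp (-‖x‖ ^ k) := by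
        intro x hx
        have hxK : x ∈ Kᶜ := fun hmem => by
          have := Metric.mem_closedBall.1 (hr hmem)
          rw [dist_zero_right] at this
          linarith
        have h3 := hKb hxK
        calc |p x| ≤ c * Real.exp (-‖x‖ ^ k) := by
              simpa [Real.norm_eq_abs, abs_of_pos (Real.exp_pos _)] using h3
          _ ≤ max c 0 * Real.exp (-‖x‖ ^ k) :=
              mul_le_mul_of_nonneg_right (le_max_left _ _) (Real.exp_pos _).le
      have hphi : Tendsto
          (fun t : ℝ => max c 0 * Cs * ((1 + t) ^ (n + 1 + ns) * Real.exp (-t ^ k)))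
          atTop (𝓝 0) := by
        have := (tendsto_poly_exp (n + 1 + ns) k hk.ne').const_mul (max c 0 * Cs)
        simpa using this
      intro ε hε
      have h1 : ∀ᶠ t : ℝ in atTop,
          max c 0 * Cs * ((1 + t) ^ (n + 1 + ns) * Real.exp (-t ^ k)) < ε :=
        hphi.eventually (gt_mem_nhds hε)
      obtain ⟨T, hT⟩ := eventually_atTop.1 (h1.and (eventually_ge_atTop (max (r + 1) 1)))
      refine ⟨max T 1, le_max_right _ _, fun x hx => ?_⟩
      obtain ⟨hlt, hge⟩ := hT ‖x‖ (le_trans (le_max_left _ _) hx)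
      have hr1 : r + 1 ≤ ‖x‖ := le_trans (le_max_left _ _) hge
      have hp' := hpb x hr1
      have hs' := hsg x
      have hnormf : ‖f x‖ = |p x| * ‖s x‖ := by
        rw [hfdef]
        simp only []
        rw [norm_smul, Real.norm_eq_abs]
      have hxp : ‖x‖ ^ (n + 1) ≤ (1 + ‖x‖) ^ (n + 1) :=
        pow_le_pow_left₀ (norm_nonneg x) (by linarith [norm_nonneg x]) _
      calc ‖x‖ ^ (n + 1) * ‖f x‖
          ≤ (1 + ‖x‖) ^ (n + 1) *
            ((max c 0 * Real.exp (-‖x‖ ^ k)) * (Cs * (1 + ‖x‖) ^ ns)) := by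
            rw [hnormf]
            have hcs0 : (0:ℝ) ≤ Cs * (1 + ‖x‖) ^ ns :=
              le_trans (norm_nonneg _) hs'
            exact mul_le_mul hxp
              (mul_le_mul hp' hs' (norm_nonneg _) (by positivity))
              (by positivity) (by positivity)
        _ = max c 0 * Cs * ((1 + ‖x‖) ^ (n + 1 + ns) * Real.exp (-‖x‖ ^ k)) := by
            rw [pow_add]; ring
        _ ≤ ε := hlt.le
    have hzero : ∫ x, divg f x = 0 := integral_divg_eq_zero f hfC hdecayf hIdiv
    have hsplit : ∫ x, divg f x
        = (∫ x, p x * ⟪g x, s x⟫) + ∫ x, p x * divg s x := by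
      rw [← integral_add hI hint3]
      refine integral_congr_ae (Filter.Eventually.of_forall fun x => ?_)
      show divg f x = p x * ⟪g x, s x⟫ + p x * divg s x
      rw [hdivprod x, hinner x]
    have hIgs : ∫ x, p x * ⟪g x, s x⟫ = - ∫ x, p x * divg s x := by
      rw [hsplit] at hzero; linarith
    have hexp : ∫ x, p x * ‖g x - s x‖ ^ 2
        = (∫ x, p x * ‖g x‖ ^ 2) - 2 * (∫ x, p x * ⟪g x, s x⟫)
          + ∫ x, p x * ‖s x‖ ^ 2 := by
      have heq : (fun x => p x * ‖g x - s x‖ ^ 2)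
          = fun x => (p x * ‖g x‖ ^ 2 - 2 * (p x * ⟪g x, s x⟫)) + p x * ‖s x‖ ^ 2 :=
        funext fun x => by rw [norm_sub_sq_real]; ring
      have hdint : Integrable
          (fun x => p x * ‖g x‖ ^ 2 - 2 * (p x * ⟪g x, s x⟫)) volume :=
        hint4.sub (hI.const_mul 2)
      rw [heq, integral_add hdint hint2,
        integral_sub hint4 (hI.const_mul 2), integral_const_mul]
    rw [hexp, hIgs]
    ring
end

section
/- Gaussian posterior mean via Tweedie's formula: let x' = αx + βz where x ~ p (a C¹ density on ℝ^D) and z ~ N(0,I) independent, α ≠ 0, β > 0, and let q denote the density of x'. Then E[x | x'] = (x' + β² ∇log q(x'))/α, for almost every x' (assuming differentiation under the integral sign is valid). -/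
open MeasureTheory InnerProductSpace

/-- The `D`-dimensional isotropic Gaussian density with mean `m` and covariance `v • I`. -/
noncomputable def gaussPDF {D : ℕ} (m : EuclideanSpace ℝ (Fin D)) (v : ℝ)
    (x : EuclideanSpace ℝ (Fin D)) : ℝ :=
  (2 * Real.pi * v) ^ (-(D : ℝ) / 2) * Real.exp (-‖x - m‖ ^ 2 / (2 * v))


lemma gauss_hasGradientAt {D : ℕ} (m : EuclideanSpace ℝ (Fin D)) {v : ℝ} (hv : 0 < v)
    (y : EuclideanSpace ℝ (Fin D)) :
    HasGradientAt (gaussPDF m v) ((gaussPDF m v y / v) • (m - y)) y := by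
  set C : ℝ := (2 * Real.pi * v) ^ (-(D : ℝ) / 2) with hC
  have h1 : HasFDerivAt (fun y : EuclideanSpace ℝ (Fin D) => ‖y - m‖ ^ 2)
      (2 • innerSL ℝ (y - m)) y := by
    simpa using ((hasFDerivAt_id y).sub_const m).norm_sq
  have h2 : HasFDerivAt (fun y : EuclideanSpace ℝ (Fin D) => -‖y - m‖ ^ 2 / (2 * v))
      ((-(2 * v)⁻¹) • (2 • innerSL ℝ (y - m))) y := by
    have := h1.const_smul (-(2 * v)⁻¹)
    refine this.congr_of_eventuallyEq (Filter.Eventually.of_forall fun z => ?_)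
    simp [smul_eq_mul]
    ring
  have h3 := h2.exp
  have h4 := h3.const_mul C
  have h5 := h4.hasGradientAt
  convert h5 using 1
  · rfl
  apply (toDual ℝ (EuclideanSpace ℝ (Fin D))).injective
  rw [LinearIsometryEquiv.apply_symm_apply]
  ext z
  simp only [toDual_apply_apply, ContinuousLinearMap.smul_apply, innerSL_apply_apply, smul_eq_mul,
    real_inner_smul_left, inner_sub_left]
  rw [gaussPDF]
  have : @inner ℝ _ _ (m : EuclideanSpace ℝ (Fin D)) z - inner ℝ (y : EuclideanSpace ℝ (Fin D)) z
      = -(inner ℝ (y : EuclideanSpace ℝ (Fin D)) z - inner ℝ (m : EuclideanSpace ℝ (Fin D)) z) := by ring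
  field_simp
  rw [hC]
  ring

lemma gradient_log_comp {D : ℕ} (q : EuclideanSpace ℝ (Fin D) → ℝ) (hq : ∀ x, 0 < q x)
    (x : EuclideanSpace ℝ (Fin D)) :
    gradient (fun y => Real.log (q y)) x = (q x)⁻¹ • gradient q x := by
  by_cases h : DifferentiableAt ℝ q x
  · have h1 : HasFDerivAt (fun y => Real.log (q y)) ((q x)⁻¹ • fderiv ℝ q x) x := by
      simpa [Function.comp_def] using (Real.hasDerivAt_log (ne_of_gt (hq x))).comp_hasFDerivAt x h.hasFDerivAt
    rw [h1.hasGradientAt.gradient, gradient]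
    simp
  · have h2 : ¬ DifferentiableAt ℝ (fun y => Real.log (q y)) x := by
      intro hc
      apply h
      have hqe : q = fun y => Real.exp (Real.log (q y)) :=
        funext fun y => (Real.exp_log (hq y)).symm
      rw [hqe]
      exact Real.differentiable_exp.differentiableAt.comp x hc
    rw [gradient_eq_zero_of_not_differentiableAt h2,
      gradient_eq_zero_of_not_differentiableAt h, smul_zero]

/-- Tweedie's formula: for `x' = αx + βz`, `x ∼ p`, `z ∼ N(0,I)`, the posterior mean is
`E[x | x'] = (x' + β² ∇log q(x'))/α`, where `q` is the marginal density of `x'`. -/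
theorem tweedie_posterior_mean {D : ℕ} (α β : ℝ) (hα : α ≠ 0) (hβ : 0 < β)
    (p q : EuclideanSpace ℝ (Fin D) → ℝ)
    (hp0 : ∀ x, 0 ≤ p x) (hp1 : ∫ x, p x = 1) (hp_smooth : ContDiff ℝ 1 p)
    (hq : ∀ x', q x' = ∫ x, p x * gaussPDF (α • x) (β ^ 2) x')
    (hqpos : ∀ x', 0 < q x')
    -- validity of differentiation under the integral sign:
    (hdui : ∀ x', gradient q x'
      = ∫ x, p x • gradient (fun y => gaussPDF (α • x) (β ^ 2) y) x')
    (hint : ∀ x', Integrable (fun x => (p x * gaussPDF (α • x) (β ^ 2) x') • x)) :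
    ∀ᵐ x', (q x')⁻¹ • (∫ x, (p x * gaussPDF (α • x) (β ^ 2) x') • x)
      = α⁻¹ • (x' + β ^ 2 • gradient (fun y => Real.log (q y)) x') := by
  have hv : (0 : ℝ) < β ^ 2 := by positivity
  apply Filter.Eventually.of_forall
  intro x'
  -- integrability of the scalar integrand
  have hsint : Integrable (fun x => p x * gaussPDF (α • x) (β ^ 2) x') := by
    by_contra h
    have := hq x'
    rw [integral_undef h] at this
    exact absurd this (ne_of_gt (hqpos x'))
  set I := ∫ x, (p x * gaussPDF (α • x) (β ^ 2) x') • x with hI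
  -- compute gradient q x'
  have hgrad : gradient q x' = (β ^ 2)⁻¹ • (α • I - q x' • x') := by
    rw [hdui x']
    have heq : ∀ x : EuclideanSpace ℝ (Fin D),
        p x • gradient (fun y => gaussPDF (α • x) (β ^ 2) y) x'
        = (β ^ 2)⁻¹ • (α • ((p x * gaussPDF (α • x) (β ^ 2) x') • x)
            - (p x * gaussPDF (α • x) (β ^ 2) x') • x') := by
      intro x
      rw [(gauss_hasGradientAt (α • x) hv x').gradient]
      match_scalars <;> field_simp <;> ring
    have hA : Integrable (fun x => α • ((p x * gaussPDF (α • x) (β ^ 2) x') • x)) :=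
      (hint x').smul α
    rw [integral_congr_ae (Filter.Eventually.of_forall heq), integral_smul,
      integral_sub hA (hsint.smul_const x'),
      integral_smul, integral_smul_const, ← hq x']
  rw [gradient_log_comp q hqpos x', hgrad]
  have h1 : q x' ≠ 0 := ne_of_gt (hqpos x')
  match_scalars <;> field_simp <;> ring
end
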